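/- arXiv:2412.07361 — 4 statements merged into one kernel-verified Lean document; each statement's English description precedes it below -/
import Mathlib

section
/- Let H be a real Hilbert space, let S ⊆ H, and let f : H → H be quasi-dissipative on S with constant a ≥ 0. Let Φ : ℝ → H → H be a flow such that for every z ∈ S the curve t ↦ Φ(t, z) takes values in S, is differentiable on [0,1] with derivative f(Φ(t, z)), and Φ(0, z) = z. Let γ be a measure on H × H concentrated on S × S such that (z₁, z₂) ↦ Φ(t, z₁) and (z₁, z₂) ↦ Φ(t, z₂) are measurable for each t and (z₁, z₂) ↦ ‖z₁ − z₂‖² is γ-integrable. Then for every t ∈ [0,1], ∫ ‖Φ(t, z₁) − Φ(t, z₂)‖² dγ(z₁, z₂) ≤ exp(2a·t) · ∫ ‖z₁ − z₂‖² dγ(z₁, z₂). -/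
open scoped RealInnerProductSpace
open MeasureTheory Set Real

/-! For two trajectories `x, y` of `ẏ = f(y)` in `S`, quasi-dissipativity gives
`d/dt ‖x - y‖² = 2⟪x - y, f x - f y⟫ ≤ 2a‖x - y‖²`, so by Grönwall `‖x t - y t‖²` grows at most
like `e^{2at}`. Integrating this pointwise bound against the coupling gives the estimate. -/

def QuasiDissipativeOn {H : Type*} [NormedAddCommGroup H] [InnerProductSpace ℝ H]
    (a : ℝ) (f : H → H) (S : Set H) : Prop :=
  ∀ y₁ ∈ S, ∀ y₂ ∈ S, ⟪y₁ - y₂, f y₁ - f y₂⟫ ≤ a * ‖y₁ - y₂‖ ^ 2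

theorem le_mul_exp_of_deriv_right_le {φ φ' : ℝ → ℝ} {K a b : ℝ}
    (hφ : ContinuousOn φ (Icc a b))
    (hφ' : ∀ x ∈ Ico a b, HasDerivWithinAt φ (φ' x) (Ici x) x)
    (bound : ∀ x ∈ Ico a b, φ' x ≤ K * φ x) :
    ∀ x ∈ Icc a b, φ x ≤ φ a * exp (K * (x - a)) := by
  intro x hx
  have := le_gronwallBound_of_liminf_deriv_right_le (ε := 0) hφ
    (fun x hx _ hr => by simpa only [slope, smul_eq_mul, vsub_eq_sub]
      using (hφ' x hx).liminf_right_slope_le hr)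
    le_rfl (by simpa using bound) x hx
  rwa [gronwallBound_ε0] at this

theorem sq_norm_sub_le_exp_mul_of_quasiDissipativeOn
    {H : Type*} [NormedAddCommGroup H] [InnerProductSpace ℝ H]
    {S : Set H} {f : H → H} {a T : ℝ} (hqd : QuasiDissipativeOn a f S) {x y : ℝ → H}
    (hx : ∀ s ∈ Icc 0 T, HasDerivAt x (f (x s)) s)
    (hy : ∀ s ∈ Icc 0 T, HasDerivAt y (f (y s)) s)
    (hxS : ∀ s ∈ Icc 0 T, x s ∈ S) (hyS : ∀ s ∈ Icc 0 T, y s ∈ S) :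
    ∀ t ∈ Icc 0 T, ‖x t - y t‖ ^ 2 ≤ exp (2 * a * t) * ‖x 0 - y 0‖ ^ 2 := by
  have hderiv : ∀ s ∈ Icc 0 T, HasDerivAt (fun r => ‖x r - y r‖ ^ 2)
      (2 * ⟪x s - y s, f (x s) - f (y s)⟫) s :=
    fun s hs => ((hx s hs).sub (hy s hs)).norm_sq
  intro t ht
  have := le_mul_exp_of_deriv_right_le (K := 2 * a)
    (fun s hs => (hderiv s hs).continuousAt.continuousWithinAt)
    (fun s hs => (hderiv s (Ico_subset_Icc_self hs)).hasDerivWithinAt)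
    (fun s hs => by
      have := hqd _ (hxS s (Ico_subset_Icc_self hs)) _ (hyS s (Ico_subset_Icc_self hs))
      linarith)
    t ht
  rwa [sub_zero, mul_comm] at this

theorem coupling_contraction_general
    {H : Type*} [NormedAddCommGroup H] [InnerProductSpace ℝ H]
    [MeasurableSpace H]
    (S : Set H) (f : H → H) (a : ℝ)
    (hqd : ∀ z₁ ∈ S, ∀ z₂ ∈ S, ⟪z₁ - z₂, f z₁ - f z₂⟫ ≤ a * ‖z₁ - z₂‖ ^ 2)
    (Φ : ℝ → H → H)
    (hmem : ∀ z ∈ S, ∀ t ∈ Set.Icc (0 : ℝ) 1, Φ t z ∈ S)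
    (hderiv : ∀ z ∈ S, ∀ t ∈ Set.Icc (0 : ℝ) 1,
      HasDerivAt (fun s => Φ s z) (f (Φ t z)) t)
    (h0 : ∀ z ∈ S, Φ 0 z = z)
    (γ : Measure (H × H))
    (hconc : ∀ᵐ p ∂γ, p.1 ∈ S ∧ p.2 ∈ S)
    (hint : Integrable (fun p : H × H => ‖p.1 - p.2‖ ^ 2) γ) :
    ∀ t ∈ Set.Icc (0 : ℝ) 1,
      ∫ p, ‖Φ t p.1 - Φ t p.2‖ ^ 2 ∂γ ≤
        Real.exp (2 * a * t) * ∫ p, ‖p.1 - p.2‖ ^ 2 ∂γ := by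
  intro t ht
  have hpointwise : ∀ᵐ p ∂γ,
      ‖Φ t p.1 - Φ t p.2‖ ^ 2 ≤ exp (2 * a * t) * ‖p.1 - p.2‖ ^ 2 := by
    filter_upwards [hconc] with p ⟨hp₁, hp₂⟩
    have := sq_norm_sub_le_exp_mul_of_quasiDissipativeOn hqd (hderiv p.1 hp₁) (hderiv p.2 hp₂)
      (hmem p.1 hp₁) (hmem p.2 hp₂) t ht
    rwa [h0 p.1 hp₁, h0 p.2 hp₂] at this
  calc ∫ p, ‖Φ t p.1 - Φ t p.2‖ ^ 2 ∂γ
      ≤ ∫ p, exp (2 * a * t) * ‖p.1 - p.2‖ ^ 2 ∂γ :=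
        integral_mono_of_nonneg (.of_forall fun _ => by positivity) (hint.const_mul _) hpointwise
    _ = exp (2 * a * t) * ∫ p, ‖p.1 - p.2‖ ^ 2 ∂γ := integral_const_mul _ _

/-- Coupling-level contraction estimate (Theorem 5.1 of the paper): for a flow `Φ` of the
quasi-dissipative evolution equation `ẏ = f(y)` on a set `S`, and any coupling `γ`
concentrated on `S × S`, the squared transport cost contracts at rate `e^{2 a t}`. -/
theorem coupling_contraction
    {H : Type*} [NormedAddCommGroup H] [InnerProductSpace ℝ H] [CompleteSpace H]
    [MeasurableSpace H] [BorelSpace H]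
    (S : Set H) (f : H → H) (a : ℝ) (ha : 0 ≤ a)
    (hqd : ∀ z₁ ∈ S, ∀ z₂ ∈ S, ⟪z₁ - z₂, f z₁ - f z₂⟫ ≤ a * ‖z₁ - z₂‖ ^ 2)
    (Φ : ℝ → H → H)
    (hmem : ∀ z ∈ S, ∀ t ∈ Set.Icc (0 : ℝ) 1, Φ t z ∈ S)
    (hderiv : ∀ z ∈ S, ∀ t ∈ Set.Icc (0 : ℝ) 1,
      HasDerivAt (fun s => Φ s z) (f (Φ t z)) t)
    (h0 : ∀ z ∈ S, Φ 0 z = z)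
    (γ : Measure (H × H))
    (hconc : ∀ᵐ p ∂γ, p.1 ∈ S ∧ p.2 ∈ S)
    (hmeas₁ : ∀ t : ℝ, Measurable fun p : H × H => Φ t p.1)
    (hmeas₂ : ∀ t : ℝ, Measurable fun p : H × H => Φ t p.2)
    (hint : Integrable (fun p : H × H => ‖p.1 - p.2‖ ^ 2) γ) :
    ∀ t ∈ Set.Icc (0 : ℝ) 1,
      ∫ p, ‖Φ t p.1 - Φ t p.2‖ ^ 2 ∂γ ≤
        Real.exp (2 * a * t) * ∫ p, ‖p.1 - p.2‖ ^ 2 ∂γ :=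
  coupling_contraction_general S f a hqd Φ hmem hderiv h0 γ hconc hint
end

section
/- Let g : ℝ → ℝ be continuous and let y_max ∈ ℝ satisfy g(s) ≤ 0 for all s ≥ y_max. Let y : ℝ × ℝ → ℝ be twice continuously differentiable, periodic in its second argument with period 1 (y(t, x+1) = y(t, x)), and satisfy the reaction-diffusion equation ∂_t y(t,x) = ∂_{xx} y(t,x) + g(y(t,x)) for all t ∈ [0,1] and x ∈ ℝ. If y(0,x) ≤ y_max for all x ∈ ℝ, then y(t,x) ≤ y_max for all t ∈ [0,1] and all x ∈ ℝ. -/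
/-! For `ε > 0` the function `v = y - ε t` satisfies `∂_t v < ∂_{xx} v` wherever `y > y_max`,
because `g ≤ 0` there. By periodicity `v` attains its maximum over `[0, T] × ℝ`; if that maximum
exceeded `y_max`, it would be attained at some `t₀ > 0`, where `∂_{xx} v ≤ 0` (a maximum in `x`)
and `∂_t v ≥ 0` (a maximum at the right end of `[0, t₀]`), a contradiction. Letting `ε → 0`
gives `y ≤ y_max`. -/

open Set Filter Topology Function

/-- If the second derivative were positive, the second-derivative test would make `a` a local
minimum too, so `f` would be locally constant. -/
theorem IsLocalMax.deriv_deriv_nonpos {f : ℝ → ℝ} {a : ℝ} (h : IsLocalMax f a)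
    (hc : ContinuousAt f a) : deriv (deriv f) a ≤ 0 := by
  by_contra! hpos
  have hconst : f =ᶠ[𝓝 a] fun _ => f a :=
    (h.and (isLocalMin_of_deriv_deriv_pos hpos h.deriv_eq_zero hc)).mono
      fun x hx => le_antisymm hx.1 hx.2
  have : deriv (deriv f) a = 0 := by
    rw [hconst.deriv.deriv_eq]
    simp
  linarith

theorem HasDerivAt.nonneg_of_isMaxOn_Icc {f : ℝ → ℝ} {f' a b : ℝ} (hf : HasDerivAt f f' b)
    (hab : a < b) (hmax : IsMaxOn f (Icc a b) b) : 0 ≤ f' := by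
  have hcone : a - b ∈ posTangentConeAt (Icc a b) b := by
    apply sub_mem_posTangentConeAt_of_segment_subset
    rw [segment_symm, segment_eq_Icc hab.le]
  have := hmax.localize.hasFDerivWithinAt_nonpos hf.hasFDerivAt.hasFDerivWithinAt hcone
  simp only [ContinuousLinearMap.toSpanSingleton_apply, smul_eq_mul] at this
  nlinarith

section Periodic

variable {u : ℝ → ℝ → ℝ} {p T M : ℝ}

theorem Differentiable.differentiableAt_left (hu : Differentiable ℝ (uncurry u)) (t x : ℝ) :
    DifferentiableAt ℝ (fun s => u s x) t :=
  (hu (t, x)).comp (f := fun s => (s, x)) t (differentiableAt_id.prodMk (differentiableAt_const x))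

theorem exists_forall_le_of_periodic (hu : Continuous (uncurry u))
    (hper : ∀ t, Periodic (u t) p) (hp : 0 < p) (hT : 0 ≤ T) :
    ∃ t₀ ∈ Icc 0 T, ∃ x₀, ∀ t ∈ Icc 0 T, ∀ x, u t x ≤ u t₀ x₀ := by
  obtain ⟨⟨t₀, x₀⟩, ⟨ht₀, -⟩, hmax⟩ :=
    (isCompact_Icc.prod (isCompact_Icc (a := 0) (b := p))).exists_isMaxOn
      ⟨(0, 0), ⟨⟨le_rfl, hT⟩, ⟨le_rfl, hp.le⟩⟩⟩ hu.continuousOn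
  refine ⟨t₀, ht₀, x₀, fun t ht x => ?_⟩
  obtain ⟨x', hx', hx⟩ := (hper t).exists_mem_Ico₀ hp x
  rw [hx]
  exact hmax (show (t, x') ∈ _ from ⟨ht, Ico_subset_Icc_self hx'⟩)

theorem le_of_periodic_of_deriv_lt (hu : Differentiable ℝ (uncurry u))
    (hper : ∀ t, Periodic (u t) p) (hp : 0 < p) (hT : 0 ≤ T) (h0 : ∀ x, u 0 x ≤ M)
    (hsub : ∀ t ∈ Ioc 0 T, ∀ x, M < u t x →
      deriv (fun s => u s x) t < deriv (deriv (u t)) x) :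
    ∀ t ∈ Icc 0 T, ∀ x, u t x ≤ M := by
  obtain ⟨t₀, ht₀, x₀, hmax⟩ := exists_forall_le_of_periodic hu.continuous hper hp hT
  suffices u t₀ x₀ ≤ M from fun t ht x => (hmax t ht x).trans this
  by_contra! hM
  have ht₀pos : 0 < t₀ := ht₀.1.lt_of_ne (by rintro rfl; exact (h0 x₀).not_gt hM)
  have hxx : deriv (deriv (u t₀)) x₀ ≤ 0 :=
    IsLocalMax.deriv_deriv_nonpos (Eventually.of_forall (hmax t₀ ht₀))
      (hu.continuous.comp (Continuous.prodMk_right t₀)).continuousAt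
  have ht : 0 ≤ deriv (fun s => u s x₀) t₀ :=
    (hu.differentiableAt_left t₀ x₀).hasDerivAt.nonneg_of_isMaxOn_Icc ht₀pos
      fun s hs => show u s x₀ ≤ u t₀ x₀ from hmax s ⟨hs.1, hs.2.trans ht₀.2⟩ x₀
  linarith [hsub t₀ ⟨ht₀pos, ht₀.2⟩ x₀ hM]

theorem le_add_mul_of_periodic_of_deriv_le (hu : Differentiable ℝ (uncurry u))
    (hper : ∀ t, Periodic (u t) p) (hp : 0 < p) (h0 : ∀ x, u 0 x ≤ M)
    (hsub : ∀ t ∈ Ioc 0 T, ∀ x, M < u t x →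
      deriv (fun s => u s x) t ≤ deriv (deriv (u t)) x)
    {ε : ℝ} (hε : 0 < ε) {t : ℝ} (ht : t ∈ Icc 0 T) (x : ℝ) : u t x ≤ M + ε * t := by
  suffices u t x - ε * t ≤ M by linarith
  refine le_of_periodic_of_deriv_lt (u := fun s x => u s x - ε * s)
    (hu.sub ((differentiable_const ε).mul differentiable_fst))
    (fun s x => by simp only [hper s x]) hp (ht.1.trans ht.2) (by simpa using h0) ?_ t ht x
  intro s hs x hM
  have hdt : HasDerivAt (fun r => u r x - ε * r) (deriv (fun r => u r x) s - ε) s := by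
    simpa using (hu.differentiableAt_left s x).hasDerivAt.fun_sub ((hasDerivAt_id' s).const_mul ε)
  rw [hdt.deriv, deriv_sub_const_fun]
  linarith [hsub s hs x (by nlinarith [hs.1])]

theorem le_of_periodic_of_deriv_le (hu : Differentiable ℝ (uncurry u))
    (hper : ∀ t, Periodic (u t) p) (hp : 0 < p) (h0 : ∀ x, u 0 x ≤ M)
    (hsub : ∀ t ∈ Ioc 0 T, ∀ x, M < u t x →
      deriv (fun s => u s x) t ≤ deriv (deriv (u t)) x) :
    ∀ t ∈ Icc 0 T, ∀ x, u t x ≤ M := by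
  intro t ht x
  refine le_of_forall_pos_le_add fun δ hδ => ?_
  have ht1 : 0 < t + 1 := by linarith [ht.1]
  have hbound := le_add_mul_of_periodic_of_deriv_le hu hper hp h0 hsub (div_pos hδ ht1) ht x
  have : δ / (t + 1) * t ≤ δ := by
    rw [div_mul_eq_mul_div, div_le_iff₀ ht1]
    nlinarith
  linarith

end Periodic

theorem reaction_diffusion_upper_invariance_general
    (g : ℝ → ℝ) (ymax : ℝ)
    (hgneg : ∀ s : ℝ, ymax ≤ s → g s ≤ 0)
    (y : ℝ → ℝ → ℝ)
    (hy : ContDiff ℝ 2 (Function.uncurry y))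
    (hper : ∀ t x : ℝ, y t (x + 1) = y t x)
    (hpde : ∀ t ∈ Set.Icc (0:ℝ) 1, ∀ x : ℝ,
      deriv (fun s => y s x) t = deriv (deriv (y t)) x + g (y t x))
    (hinit : ∀ x : ℝ, y 0 x ≤ ymax) :
    ∀ t ∈ Set.Icc (0:ℝ) 1, ∀ x : ℝ, y t x ≤ ymax :=
  le_of_periodic_of_deriv_le (hy.differentiable (by norm_num)) hper one_pos hinit
    fun t ht x hx => by linarith [hpde t (Ioc_subset_Icc_self ht) x, hgneg _ hx.le]

/-- Upper-bound half of the positive invariance result (Lemma 3.3 of the paper): a classical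
periodic solution of the reaction-diffusion equation `∂_t y = ∂_{xx} y + g(y)` that starts
below `y_max` stays below `y_max`, provided `g(s) ≤ 0` for `s ≥ y_max`. -/
theorem reaction_diffusion_upper_invariance
    (g : ℝ → ℝ) (hg : Continuous g) (ymax : ℝ)
    (hgneg : ∀ s : ℝ, ymax ≤ s → g s ≤ 0)
    (y : ℝ → ℝ → ℝ)
    (hy : ContDiff ℝ 2 (Function.uncurry y))
    (hper : ∀ t x : ℝ, y t (x + 1) = y t x)
    (hpde : ∀ t ∈ Set.Icc (0:ℝ) 1, ∀ x : ℝ,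
      deriv (fun s => y s x) t = deriv (deriv (y t)) x + g (y t x))
    (hinit : ∀ x : ℝ, y 0 x ≤ ymax) :
    ∀ t ∈ Set.Icc (0:ℝ) 1, ∀ x : ℝ, y t x ≤ ymax :=
  reaction_diffusion_upper_invariance_general g ymax hgneg y hy hper hpde hinit
end

section
/- Let g : ℝ → ℝ be continuous and let y_min ∈ ℝ satisfy g(s) ≥ 0 for all s ≤ y_min. Let y : ℝ × ℝ → ℝ be twice continuously differentiable, periodic in its second argument with period 1 (y(t, x+1) = y(t, x)), and satisfy the reaction-diffusion equation ∂_t y(t,x) = ∂_{xx} y(t,x) + g(y(t,x)) for all t ∈ [0,1] and x ∈ ℝ. If y(0,x) ≥ y_min for all x ∈ ℝ, then y(t,x) ≥ y_min for all t ∈ [0,1] and all x ∈ ℝ. -/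
/-!
A weak maximum principle for space-periodic supersolutions of the heat equation, applied to
`y - y_min`: wherever `y < y_min` we have `g(y) ≥ 0`, so `∂_t y ≥ ∂_{xx} y` there.
For the strict supersolution `u + ε (1 + t)`, periodicity and compactness give a first time `t₀`
and a point `x₀` where it vanishes. There `x ↦ u(t₀, x)` has a minimum, so `∂_{xx} ≥ 0`, and
`t ↦ u(t, x₀)` decreases to `0` from the left, so `∂_t ≤ 0`, contradicting strictness.
Letting `ε → 0` gives the bound.
-/

open Filter Set Topology Function

theorem IsLocalMin.deriv_deriv_nonneg {f : ℝ → ℝ} {x₀ : ℝ} (hmin : IsLocalMin f x₀)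
    (hc : ContinuousAt f x₀) : 0 ≤ deriv (deriv f) x₀ := by
  by_contra! hneg
  -- the second-derivative test would make `x₀` a local maximum too, so `f` is locally constant
  have hmax := isLocalMax_of_deriv_deriv_neg hneg hmin.deriv_eq_zero hc
  have hconst : f =ᶠ[𝓝 x₀] fun _ => f x₀ :=
    (hmax.and hmin).mono fun x hx => le_antisymm hx.1 hx.2
  have hderiv : deriv f =ᶠ[𝓝 x₀] fun _ => 0 :=
    hconst.eventuallyEq_nhds.mono fun x hx => by rw [hx.deriv_eq, deriv_const]
  rw [hderiv.deriv_eq, deriv_const] at hneg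
  exact hneg.false

theorem IsLocalMinOn.deriv_nonpos_of_Iic {f : ℝ → ℝ} {a : ℝ} (hmin : IsLocalMinOn f (Iic a) a) :
    deriv f a ≤ 0 := by
  by_cases hf : DifferentiableAt ℝ f a
  · have hcone : (-1 : ℝ) ∈ posTangentConeAt (Iic a) a :=
      mem_posTangentConeAt_of_segment_subset fun x hx => by
        rw [segment_eq_uIcc] at hx
        exact hx.2.trans (max_le le_rfl (by linarith))
    simpa using hmin.hasFDerivWithinAt_nonneg hf.hasFDerivAt.hasFDerivWithinAt hcone
  · rw [deriv_zero_of_not_differentiableAt hf]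

theorem exists_first_nonpos_of_periodic {F : ℝ → ℝ → ℝ} {c : ℝ} (hF : Continuous (uncurry F))
    (hper : ∀ t, Periodic (F t) c) (hc : 0 < c) {a t₁ x₁ : ℝ} (ht₁ : a ≤ t₁)
    (h₁ : F t₁ x₁ ≤ 0) :
    ∃ t₀ ∈ Icc a t₁, ∃ x₀, F t₀ x₀ ≤ 0 ∧ ∀ t ∈ Ico a t₀, ∀ x, 0 < F t x := by
  set K : Set (ℝ × ℝ) := (Icc a t₁ ×ˢ Icc 0 c) ∩ {p | F p.1 p.2 ≤ 0}
  have hK : IsCompact K :=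
    (isCompact_Icc.prod isCompact_Icc).inter_right (isClosed_le hF continuous_const)
  have hmem : ∀ t ∈ Icc a t₁, ∀ x, F t x ≤ 0 → ∃ x' ∈ Icc 0 c, (t, x') ∈ K := by
    intro t ht x hx
    obtain ⟨x', hx', hxx'⟩ := (hper t).exists_mem_Ico₀ hc x
    exact ⟨x', Ico_subset_Icc_self hx', ⟨ht, Ico_subset_Icc_self hx'⟩, show F t x' ≤ 0 from hxx' ▸ hx⟩
  obtain ⟨x₁', -, hx₁'⟩ := hmem t₁ ⟨ht₁, le_rfl⟩ x₁ h₁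
  obtain ⟨⟨t₀, x₀⟩, ⟨⟨ht₀, -⟩, hx₀⟩, hfirst⟩ :=
    hK.exists_isMinOn ⟨_, hx₁'⟩ continuous_fst.continuousOn
  refine ⟨t₀, ht₀, x₀, hx₀, fun t ht x => ?_⟩
  by_contra! hx
  obtain ⟨x', -, hx'⟩ := hmem t ⟨ht.1, ht.2.le.trans ht₀.2⟩ x hx
  exact (hfirst hx').not_gt ht.2

theorem periodic_heat_strict_supersolution_pos {u : ℝ → ℝ → ℝ} {c T : ℝ}
    (hu : Continuous (uncurry u)) (hper : ∀ t, Periodic (u t) c) (hc : 0 < c)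
    (hinit : ∀ x, 0 < u 0 x)
    (hsuper : ∀ t ∈ Ioc 0 T, ∀ x, u t x = 0 →
      deriv (deriv (u t)) x < deriv (fun s => u s x) t) :
    ∀ t ∈ Icc 0 T, ∀ x, 0 < u t x := by
  intro t₁ ht₁ x₁
  by_contra! h₁
  obtain ⟨t₀, ht₀, x₀, hx₀, hbefore⟩ :=
    exists_first_nonpos_of_periodic hu hper hc ht₁.1 h₁
  have ht₀pos : 0 < t₀ := ht₀.1.lt_of_ne fun h => (hinit x₀).not_ge (h ▸ hx₀)
  have hslice : ∀ x, Continuous fun t => u t x := fun x =>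
    hu.comp (continuous_id.prodMk continuous_const)
  have hnonneg : ∀ x, 0 ≤ u t₀ x := fun x => by
    have hclosed := (isClosed_Ici (a := (0 : ℝ))).preimage (hslice x)
    refine hclosed.closure_subset_iff.mpr (fun t ht => (hbefore t ht x).le) ?_
    rw [closure_Ico ht₀pos.ne]
    exact right_mem_Icc.mpr ht₀pos.le
  have hzero : u t₀ x₀ = 0 := le_antisymm hx₀ (hnonneg x₀)
  have hspace : 0 ≤ deriv (deriv (u t₀)) x₀ :=
    IsLocalMin.deriv_deriv_nonneg (Eventually.of_forall fun x => hzero ▸ hnonneg x)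
      (hu.comp (continuous_const.prodMk continuous_id)).continuousAt
  have htime : deriv (fun s => u s x₀) t₀ ≤ 0 := by
    refine IsLocalMinOn.deriv_nonpos_of_Iic ?_
    filter_upwards [Ioc_mem_nhdsLE ht₀pos] with t ht
    rcases ht.2.lt_or_eq with ht' | rfl
    · exact hzero ▸ (hbefore t ⟨ht.1.le, ht'⟩ x₀).le
    · exact le_rfl
  exact (hsuper t₀ ⟨ht₀pos, ht₀.2.trans ht₁.2⟩ x₀ hzero).not_ge (htime.trans hspace)

theorem periodic_heat_supersolution_nonneg {u : ℝ → ℝ → ℝ} {c T : ℝ}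
    (hu : Continuous (uncurry u)) (hut : ∀ x, Differentiable ℝ fun t => u t x)
    (hper : ∀ t, Periodic (u t) c) (hc : 0 < c) (hinit : ∀ x, 0 ≤ u 0 x)
    (hsuper : ∀ t ∈ Ioc 0 T, ∀ x, u t x < 0 →
      deriv (deriv (u t)) x ≤ deriv (fun s => u s x) t) :
    ∀ t ∈ Icc 0 T, ∀ x, 0 ≤ u t x := by
  have hpert : ∀ ε > 0, ∀ t ∈ Icc 0 T, ∀ x, 0 < u t x + ε * (1 + t) := by
    intro ε hε
    refine periodic_heat_strict_supersolution_pos (u := fun t x => u t x + ε * (1 + t))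
      (hu.add (continuous_const.mul (continuous_const.add continuous_fst)))
      (fun t x => by simp only [hper t x]) hc (fun x => by linarith [hinit x]) ?_
    intro t ht x hzero
    have htime : HasDerivAt (fun s => u s x + ε * (1 + s)) (deriv (fun s => u s x) t + ε) t := by
      have := (hut x t).hasDerivAt.add (((hasDerivAt_id' t).const_add 1).const_mul ε)
      rwa [mul_one] at this
    rw [htime.deriv, deriv_add_const']
    linarith [hsuper t ht x (by nlinarith [ht.1])]
  intro t ht x
  refine le_of_forall_pos_lt_add fun δ hδ => ?_
  have hpos : (0 : ℝ) < 1 + t := by linarith [ht.1]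
  simpa [div_mul_cancel₀ δ hpos.ne'] using hpert (δ / (1 + t)) (div_pos hδ hpos) t ht x

theorem reaction_diffusion_lower_invariance_general
    (g : ℝ → ℝ) (ymin : ℝ)
    (hgpos : ∀ s : ℝ, s ≤ ymin → 0 ≤ g s)
    (y : ℝ → ℝ → ℝ)
    (hy : ContDiff ℝ 2 (Function.uncurry y))
    (hper : ∀ t x : ℝ, y t (x + 1) = y t x)
    (hpde : ∀ t ∈ Set.Icc (0:ℝ) 1, ∀ x : ℝ,
      deriv (fun s => y s x) t = deriv (deriv (y t)) x + g (y t x))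
    (hinit : ∀ x : ℝ, ymin ≤ y 0 x) :
    ∀ t ∈ Set.Icc (0:ℝ) 1, ∀ x : ℝ, ymin ≤ y t x := by
  have hdiff : ∀ x, Differentiable ℝ fun t => y t x := fun x =>
    (hy.differentiable two_ne_zero).comp (differentiable_id.prodMk (differentiable_const x))
  have hsuper : ∀ t ∈ Ioc (0 : ℝ) 1, ∀ x, y t x - ymin < 0 →
      deriv (deriv fun x => y t x - ymin) x ≤ deriv (fun s => y s x - ymin) t := by
    intro t ht x hbelow
    rw [deriv_sub_const_fun, deriv_sub_const, hpde t (Ioc_subset_Icc_self ht) x]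
    linarith [hgpos (y t x) (by linarith)]
  intro t ht x
  exact sub_nonneg.mp <| periodic_heat_supersolution_nonneg (u := fun t x => y t x - ymin)
    (hy.continuous.sub continuous_const)
    (fun x => (hdiff x).sub_const ymin) (fun t x => by simp only [hper t x]) one_pos
    (fun x => sub_nonneg.mpr (hinit x)) hsuper t ht x

/-- Lower-bound half of the positive invariance result (Lemma 3.3 of the paper): a classical
periodic solution of the reaction-diffusion equation `∂_t y = ∂_{xx} y + g(y)` that starts
above `y_min` stays above `y_min`, provided `g(s) ≥ 0` for `s ≤ y_min`. -/
theorem reaction_diffusion_lower_invariance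
    (g : ℝ → ℝ) (hg : Continuous g) (ymin : ℝ)
    (hgpos : ∀ s : ℝ, s ≤ ymin → 0 ≤ g s)
    (y : ℝ → ℝ → ℝ)
    (hy : ContDiff ℝ 2 (Function.uncurry y))
    (hper : ∀ t x : ℝ, y t (x + 1) = y t x)
    (hpde : ∀ t ∈ Set.Icc (0:ℝ) 1, ∀ x : ℝ,
      deriv (fun s => y s x) t = deriv (deriv (y t)) x + g (y t x))
    (hinit : ∀ x : ℝ, ymin ≤ y 0 x) :
    ∀ t ∈ Set.Icc (0:ℝ) 1, ∀ x : ℝ, ymin ≤ y t x :=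
  reaction_diffusion_lower_invariance_general g ymin hgpos y hy hper hpde hinit
end

section
/- Let H be a real Hilbert space, f : H → H a Borel measurable map, and let Φ : ℝ → H → H be such that (t, z) ↦ Φ(t, z) is continuous, Φ(0, z) = z for all z, and for every z ∈ H the curve t ↦ Φ(t, z) is differentiable on [0,1] with derivative f(Φ(t, z)). Let μ₀ be a Borel probability measure on H, and let φ : ℝ × H → ℝ be continuously (Fréchet) differentiable such that φ, its time derivative ∂_t φ, and the operator norm of its space derivative D_z φ are uniformly bounded. Assume moreover that ∫₀¹ ∫_H ‖f(Φ(t, z))‖ dμ₀(z) dt < ∞. Then, writing μ_t for the push-forward of μ₀ under z ↦ Φ(t, z), ∫₀¹ ∫_H ( ∂_t φ(t, z) + D_z φ(t, z)(f(z)) ) dμ_t(z) dt = ∫_H φ(1, z) dμ₁(z) − ∫_H φ(0, z) dμ₀(z). -/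
/-!
By the change of variables `μ_t = Φ(t,·)_# μ₀`, the inner integral becomes
`∫ Dφ(t, Φ(t,z)) (1, f(Φ(t,z))) dμ₀(z)`, and by the chain rule the integrand is the time derivative
of `t ↦ φ(t, Φ(t,z))` along each trajectory. It is bounded by `C (1 + ‖f(Φ(t,z))‖)`, hence integrable
on `[0,1] × H`; Fubini then lets us integrate in time first, and the fundamental theorem of calculus
on each trajectory gives `φ(1, Φ(1,z)) - φ(0, z)`.
-/

open MeasureTheory Filter Set Topology

theorem HasDerivAt.tendsto_nat_slope {E : Type*} [NormedAddCommGroup E] [NormedSpace ℝ E]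
    {γ : ℝ → E} {v : E} (h : HasDerivAt γ v 0) :
    Tendsto (fun n : ℕ => ((n : ℝ) + 1) • (γ ((n : ℝ) + 1)⁻¹ - γ 0)) atTop (𝓝 v) := by
  have hseq : Tendsto (fun n : ℕ => ((n : ℝ) + 1)⁻¹) atTop (𝓝[≠] 0) :=
    tendsto_nhdsWithin_of_tendsto_nhds_of_eventually_within _
      (by simpa only [one_div] using tendsto_one_div_add_atTop_nhds_zero_nat (𝕜 := ℝ))
      (Eventually.of_forall fun n => by simp only [mem_compl_iff, mem_singleton_iff]; positivity)
  convert h.tendsto_slope.comp hseq using 2 with n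
  simp [slope]

theorem measurable_clm_apply_of_tendsto {𝕜 X E F : Type*} [NontriviallyNormedField 𝕜]
    [TopologicalSpace X] [MeasurableSpace X] [OpensMeasurableSpace X]
    [NormedAddCommGroup E] [NormedSpace 𝕜 E] [NormedAddCommGroup F] [NormedSpace 𝕜 F]
    [MeasurableSpace F] [BorelSpace F]
    {L : X → E →L[𝕜] F} (hL : Continuous L) {v : ℕ → X → E} (hv : ∀ n, Continuous (v n))
    {w : X → E} (hw : ∀ x, Tendsto (fun n => v n x) atTop (𝓝 (w x))) :
    Measurable fun x => L x (w x) :=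
  measurable_of_tendsto_metrizable (fun n => (hL.clm_apply (hv n)).measurable)
    (tendsto_pi_nhds.2 fun x => ((L x).continuous.tendsto _).comp (hw x))

-- `H` need not be separable, so the velocity field is only known to be a pointwise limit of
-- continuous maps, namely the difference quotients of the flow.
theorem measurable_fderiv_apply_one_velocity {H F : Type*} [NormedAddCommGroup H]
    [NormedSpace ℝ H] [MeasurableSpace H] [BorelSpace H] [NormedAddCommGroup F] [NormedSpace ℝ F]
    [MeasurableSpace F] [BorelSpace F] {φ : ℝ × H → F} (hφ : Continuous (fderiv ℝ φ))
    {Φ : ℝ → H → H} (hΦ : Continuous fun p : ℝ × H => Φ p.1 p.2) {f : H → H}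
    (hvel : ∀ z, HasDerivAt (fun s => Φ s z) (f z) 0) :
    Measurable fun p : ℝ × H => fderiv ℝ φ p (1, f p.2) :=
  measurable_clm_apply_of_tendsto hφ
    (v := fun n p => ((1 : ℝ), ((n : ℝ) + 1) • (Φ ((n : ℝ) + 1)⁻¹ p.2 - Φ 0 p.2)))
    (fun n => by fun_prop)
    (fun p => tendsto_const_nhds.prodMk_nhds (hvel p.2).tendsto_nat_slope)

section PartialDerivatives

variable {𝕜 E F : Type*} [NontriviallyNormedField 𝕜] [NormedAddCommGroup E] [NormedSpace 𝕜 E]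
  [NormedAddCommGroup F] [NormedSpace 𝕜 F] {φ : 𝕜 × E → F} {t : 𝕜} {z : E}

theorem DifferentiableAt.hasDerivAt_comp_graph {γ : 𝕜 → E} {v : E}
    (hφ : DifferentiableAt 𝕜 φ (t, γ t)) (hγ : HasDerivAt γ v t) :
    HasDerivAt (fun s => φ (s, γ s)) (fderiv 𝕜 φ (t, γ t) (1, v)) t :=
  hφ.hasFDerivAt.comp_hasDerivAt t ((hasDerivAt_id t).prodMk hγ)

theorem DifferentiableAt.fderiv_apply_one_eq (h : DifferentiableAt 𝕜 φ (t, z)) (v : E) :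
    fderiv 𝕜 φ (t, z) (1, v) = deriv (fun s => φ (s, z)) t + fderiv 𝕜 (fun w => φ (t, w)) z v := by
  have ht : HasDerivAt (fun s => φ (s, z)) (fderiv 𝕜 φ (t, z) (1, 0)) t :=
    h.hasDerivAt_comp_graph (hasDerivAt_const t z)
  have hz : HasFDerivAt (fun w => φ (t, w))
      ((fderiv 𝕜 φ (t, z)).comp (ContinuousLinearMap.inr 𝕜 𝕜 E)) z :=
    h.hasFDerivAt.comp z (hasFDerivAt_prodMk_right t z)
  rw [ht.deriv, hz.fderiv, ContinuousLinearMap.comp_apply, ← map_add]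
  simp

theorem DifferentiableAt.norm_fderiv_apply_one_le (h : DifferentiableAt 𝕜 φ (t, z)) (v : E) :
    ‖fderiv 𝕜 φ (t, z) (1, v)‖ ≤
      ‖deriv (fun s => φ (s, z)) t‖ + ‖fderiv 𝕜 (fun w => φ (t, w)) z‖ * ‖v‖ := by
  rw [h.fderiv_apply_one_eq]
  exact (norm_add_le _ _).trans (add_le_add_right (ContinuousLinearMap.le_opNorm _ _) _)

end PartialDerivatives

theorem integral_integral_eq_sub_of_hasDerivAt {X E : Type*} [MeasurableSpace X]
    {μ : Measure X} [SFinite μ] [NormedAddCommGroup E] [NormedSpace ℝ E] [CompleteSpace E]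
    {u u' : ℝ → X → E} {a b : ℝ} (hab : a ≤ b)
    (hu : ∀ x, ∀ t ∈ Icc a b, HasDerivAt (u · x) (u' t x) t)
    (hu' : Integrable (Function.uncurry u') ((volume.restrict (Icc a b)).prod μ))
    (ha : Integrable (u a) μ) (hb : Integrable (u b) μ) :
    ∫ t in a..b, ∫ x, u' t x ∂μ = ∫ x, u b x ∂μ - ∫ x, u a x ∂μ := by
  have hFTC : ∀ᵐ x ∂μ, ∫ t in Icc a b, u' t x = u b x - u a x := by
    filter_upwards [hu'.prod_left_ae] with x hx
    rw [integral_Icc_eq_integral_Ioc, ← intervalIntegral.integral_of_le hab]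
    exact intervalIntegral.integral_eq_sub_of_hasDerivAt
      (fun t ht => hu x t (uIcc_of_le hab ▸ ht))
      ((intervalIntegrable_iff_integrableOn_Icc_of_le hab).2 hx)
  rw [intervalIntegral.integral_of_le hab, ← integral_Icc_eq_integral_Ioc,
    integral_integral_swap hu', integral_congr_ae hFTC, integral_sub hb ha]

theorem pushforward_solves_liouville_general
    {H : Type*} [NormedAddCommGroup H] [InnerProductSpace ℝ H]
    [MeasurableSpace H] [BorelSpace H]
    (f : H → H)
    (Φ : ℝ → H → H)
    (hΦcont : Continuous fun p : ℝ × H => Φ p.1 p.2)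
    (hΦ0 : ∀ z : H, Φ 0 z = z)
    (hΦderiv : ∀ z : H, ∀ t ∈ Set.Icc (0:ℝ) 1, HasDerivAt (fun s => Φ s z) (f (Φ t z)) t)
    (μ₀ : Measure H) [IsProbabilityMeasure μ₀]
    (φ : ℝ × H → ℝ) (hφ : ContDiff ℝ 1 φ)
    (C : ℝ)
    (hφbdd : ∀ (t : ℝ) (z : H), |φ (t, z)| ≤ C)
    (hφtbdd : ∀ (t : ℝ) (z : H), |deriv (fun s => φ (s, z)) t| ≤ C)
    (hφzbdd : ∀ (t : ℝ) (z : H), ‖fderiv ℝ (fun w => φ (t, w)) z‖ ≤ C)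
    (hfint : Integrable (fun p : ℝ × H => ‖f (Φ p.1 p.2)‖)
      ((volume.restrict (Set.Icc (0:ℝ) 1)).prod μ₀)) :
    (∫ t in (0:ℝ)..1, ∫ z,
        (deriv (fun s => φ (s, z)) t + fderiv ℝ (fun w => φ (t, w)) z (f z))
          ∂(μ₀.map (Φ t))) =
      (∫ z, φ (1, z) ∂(μ₀.map (Φ 1))) - ∫ z, φ (0, z) ∂μ₀ := by
  have hφd : Differentiable ℝ φ := hφ.differentiable one_ne_zero
  have hΦt : ∀ t, Continuous (Φ t) := fun t => hΦcont.comp (Continuous.prodMk_right t)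
  have hvel : ∀ z, HasDerivAt (fun s => Φ s z) (f z) 0 := fun z => by
    simpa only [hΦ0] using hΦderiv z 0 ⟨le_rfl, zero_le_one⟩
  let G : ℝ × H → ℝ := fun p => fderiv ℝ φ p (1, f p.2)
  have hG_meas : Measurable G :=
    measurable_fderiv_apply_one_velocity (hφ.continuous_fderiv one_ne_zero) hΦcont hvel
  have hG_le : ∀ p : ℝ × H, ‖G p‖ ≤ C + C * ‖f p.2‖ := fun p =>
    ((hφd p).norm_fderiv_apply_one_le _).trans <| add_le_add (hφtbdd _ _)
      (mul_le_mul_of_nonneg_right (hφzbdd _ _) (norm_nonneg _))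
  have hG_int : Integrable (fun p : ℝ × H => G (p.1, Φ p.1 p.2))
      ((volume.restrict (Icc (0:ℝ) 1)).prod μ₀) :=
    ((integrable_const C).add (hfint.const_mul C)).mono'
      (hG_meas.comp (measurable_fst.prodMk hΦcont.measurable)).aestronglyMeasurable
      (Eventually.of_forall fun p => hG_le _)
  have hφ_int : ∀ s, Integrable (fun z => φ (s, Φ s z)) μ₀ := fun s =>
    .of_bound (hφ.continuous.comp (continuous_const.prodMk (hΦt s))).aestronglyMeasurable C
      (Eventually.of_forall fun z => hφbdd _ _)
  calc _ = ∫ t in (0:ℝ)..1, ∫ z, G (t, Φ t z) ∂μ₀ := by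
        simp_rw [← (hφd _).fderiv_apply_one_eq]
        exact intervalIntegral.integral_congr fun t _ => integral_map (hΦt t).aemeasurable
          (hG_meas.comp measurable_prodMk_left).aestronglyMeasurable
    _ = ∫ z, φ (1, Φ 1 z) ∂μ₀ - ∫ z, φ (0, Φ 0 z) ∂μ₀ :=
        integral_integral_eq_sub_of_hasDerivAt zero_le_one
          (fun z t ht => (hφd _).hasDerivAt_comp_graph (hΦderiv z t ht)) hG_int
          (hφ_int 0) (hφ_int 1)
    _ = _ := by
        rw [integral_map (f := fun z => φ (1, z)) (hΦt 1).aemeasurable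
          (hφ.continuous.comp (Continuous.prodMk_right 1)).aestronglyMeasurable]
        simp only [hΦ0]

/-- The push-forward computation of Section 4 of the paper: the push-forward
`μ_t = Φ(t,·)_# μ₀` of an initial probability measure through the solution flow of
`ẏ = f(y)` solves the Liouville equation in weak (test-function) form. -/
theorem pushforward_solves_liouville
    {H : Type*} [NormedAddCommGroup H] [InnerProductSpace ℝ H] [CompleteSpace H]
    [MeasurableSpace H] [BorelSpace H]
    (f : H → H) (hf : Measurable f)
    (Φ : ℝ → H → H)
    (hΦcont : Continuous fun p : ℝ × H => Φ p.1 p.2)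
    (hΦ0 : ∀ z : H, Φ 0 z = z)
    (hΦderiv : ∀ z : H, ∀ t ∈ Set.Icc (0:ℝ) 1, HasDerivAt (fun s => Φ s z) (f (Φ t z)) t)
    (μ₀ : Measure H) [IsProbabilityMeasure μ₀]
    (φ : ℝ × H → ℝ) (hφ : ContDiff ℝ 1 φ)
    (C : ℝ)
    (hφbdd : ∀ (t : ℝ) (z : H), |φ (t, z)| ≤ C)
    (hφtbdd : ∀ (t : ℝ) (z : H), |deriv (fun s => φ (s, z)) t| ≤ C)
    (hφzbdd : ∀ (t : ℝ) (z : H), ‖fderiv ℝ (fun w => φ (t, w)) z‖ ≤ C)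
    (hfint : Integrable (fun p : ℝ × H => ‖f (Φ p.1 p.2)‖)
      ((volume.restrict (Set.Icc (0:ℝ) 1)).prod μ₀)) :
    (∫ t in (0:ℝ)..1, ∫ z,
        (deriv (fun s => φ (s, z)) t + fderiv ℝ (fun w => φ (t, w)) z (f z))
          ∂(μ₀.map (Φ t))) =
      (∫ z, φ (1, z) ∂(μ₀.map (Φ 1))) - ∫ z, φ (0, z) ∂μ₀ :=
  pushforward_solves_liouville_general f Φ hΦcont hΦ0 hΦderiv μ₀ φ hφ C hφbdd hφtbdd hφzbdd hfint
end
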